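/- arXiv:2409.01984 — 3 statements merged into one kernel-verified Lean document; each statement's English description precedes it below -/
import Mathlib

section
/- If a contextual proxy model ω satisfies E[ω_r(X, y)] = P(h(X) = r | f(X) = y) for a randomized classifier h, and h is distributed so that P(h(X) = r | f(X) = y) = P(R = r | f(X) = y) for both y ∈ {0,1}, then the Bayes estimator built from ω equals P(f(X) = 1 | R = r). In particular, for two decision functions f, the difference of Bayes estimates equals the true disparity |P(f(X)=1 | R = r₁) − P(f(X)=1 | R = r₂)| when ω is mean consistent for both races. -/
open scoped Classical
open Finset

/-- Probability of an event under a weight function on a finite sample space. -/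
noncomputable def Pr {Ω : Type*} [Fintype Ω] (P : Ω → ℝ) (A : Ω → Prop) : ℝ :=
  ∑ ω, if A ω then P ω else 0

/-- Conditional probability `P(A | B)`. -/
noncomputable def cPr {Ω : Type*} [Fintype Ω] (P : Ω → ℝ) (A B : Ω → Prop) : ℝ :=
  Pr P (fun ω => A ω ∧ B ω) / Pr P B

/-- Expectation of a real random variable. -/
noncomputable def Ex {Ω : Type*} [Fintype Ω] (P : Ω → ℝ) (g : Ω → ℝ) : ℝ :=
  ∑ ω, P ω * g ω

/-- Population-level Bayes estimator built from a contextual proxy. -/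
noncomputable def bayesEst {Ω 𝓧 𝓡 : Type*} [Fintype Ω]
    (P : Ω → ℝ) (X : Ω → 𝓧) (f : 𝓧 → Bool) (w : 𝓡 → 𝓧 → Bool → ℝ) (r : 𝓡) : ℝ :=
  Ex P (fun ω => w r (X ω) true) * Pr P (fun ω => f (X ω) = true) /
    ∑ y : Bool, Ex P (fun ω => w r (X ω) y) * Pr P (fun ω => f (X ω) = y)

theorem bayes_estimator_recovers_true_disparity
    {Ω 𝓧 𝓡 : Type*} [Fintype Ω] [Fintype 𝓧] [Fintype 𝓡]
    (P : Ω → ℝ) (hP : ∀ ω, 0 ≤ P ω) (hPsum : ∑ ω, P ω = 1)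
    (X : Ω → 𝓧) (R : Ω → 𝓡) (H : Ω → 𝓡) (f : 𝓧 → Bool)
    (w : 𝓡 → 𝓧 → Bool → ℝ) (r₁ r₂ : 𝓡)
    (hfpos : ∀ y : Bool, 0 < Pr P (fun ω => f (X ω) = y))
    (hr₁ : 0 < Pr P (fun ω => R ω = r₁)) (hr₂ : 0 < Pr P (fun ω => R ω = r₂))
    (hω : ∀ (r : 𝓡) (y : Bool), r = r₁ ∨ r = r₂ →
      Ex P (fun ω => w r (X ω) y) = cPr P (fun ω => H ω = r) (fun ω => f (X ω) = y))
    (hmatch : ∀ (r : 𝓡) (y : Bool), r = r₁ ∨ r = r₂ →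
      cPr P (fun ω => H ω = r) (fun ω => f (X ω) = y) =
        cPr P (fun ω => R ω = r) (fun ω => f (X ω) = y)) :
    (∀ r : 𝓡, r = r₁ ∨ r = r₂ →
        bayesEst P X f w r = cPr P (fun ω => f (X ω) = true) (fun ω => R ω = r)) ∧
      |bayesEst P X f w r₁ - bayesEst P X f w r₂| =
        |cPr P (fun ω => f (X ω) = true) (fun ω => R ω = r₁) -
          cPr P (fun ω => f (X ω) = true) (fun ω => R ω = r₂)| := by
  have key : ∀ r : 𝓡, r = r₁ ∨ r = r₂ →
      bayesEst P X f w r = cPr P (fun ω => f (X ω) = true) (fun ω => R ω = r) := by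
    intro r hr
    have hterm : ∀ y : Bool, Ex P (fun ω => w r (X ω) y) * Pr P (fun ω => f (X ω) = y)
        = Pr P (fun ω => R ω = r ∧ f (X ω) = y) := by
      intro y
      rw [hω r y hr, hmatch r y hr, cPr]
      field_simp [ne_of_gt (hfpos y)]
    have hdenom : ∑ y : Bool, Ex P (fun ω => w r (X ω) y) * Pr P (fun ω => f (X ω) = y)
        = Pr P (fun ω => R ω = r) := by
      simp only [hterm]
      rw [Fintype.sum_bool, Pr, Pr, Pr, ← Finset.sum_add_distrib]
      apply Finset.sum_congr rfl
      intro ω _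
      by_cases h1 : R ω = r <;> by_cases h2 : f (X ω) = true <;>
        simp [h1, h2]
    rw [bayesEst, hdenom, hterm true, cPr]
    congr 1
    unfold Pr
    apply Finset.sum_congr rfl
    intro ω _
    simp [and_comm]
  refine ⟨key, ?_⟩
  rw [key r₁ (Or.inl rfl), key r₂ (Or.inr rfl)]
end

section
/- (Theorem: mean consistency implies ε-biased estimates.) Fix ε ∈ [0,1] and a decision function f. Suppose |ρ_r − θ_r| ≤ γ with γ < θ_r, where θ_r = P(R = r), ρ_r = P(h(X) = r), and ν_f = P(f(X) = 1). Let ω̄_r^f = E[ω_r(X,1)] = P(h(X) = r | f(X) = 1), and suppose the mean consistency violation satisfies |ω̄_r^f − P(R = r | f(X) = 1)| ≤ (ε θ_r / ν_f) − (ω̄_r^f γ)/(θ_r − γ). Then |P(f(X) = 1 | h(X) = r) − P(f(X) = 1 | R = r)| ≤ ε. -/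
open scoped Classical
open Finset

lemma arith_aux (θ ρ ν a b γ ε : ℝ) (hθ : 0 < θ) (hρ : 0 < ρ) (hν : 0 < ν)
    (ha : 0 ≤ a) (hθγ : 0 < θ - γ) (hρθ : |ρ - θ| ≤ γ)
    (hmc : |a / ν - b / ν| ≤ ε * θ / ν - a / ν * γ / (θ - γ)) :
    |a / ρ - b / θ| ≤ ε := by
  have hγ0 : 0 ≤ γ := le_trans (abs_nonneg _) hρθ
  have hρge : θ - γ ≤ ρ := by
    have := abs_le.mp hρθ; linarith [this.1]
  have h1 : |a - b| ≤ ε * θ - a * γ / (θ - γ) := by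
    rw [div_sub_div_same, abs_div, abs_of_pos hν] at hmc
    have h : ε * θ / ν - a / ν * γ / (θ - γ) = (ε * θ - a * γ / (θ - γ)) / ν := by
      field_simp
    rw [h] at hmc
    exact (div_le_div_iff_of_pos_right hν).mp hmc
  have h2 : |a / ρ - a / θ| ≤ a * γ / ((θ - γ) * θ) := by
    have heq : a / ρ - a / θ = a * (θ - ρ) / (ρ * θ) := by
      field_simp
    rw [heq, abs_div, abs_mul, abs_of_nonneg ha, abs_of_pos (mul_pos hρ hθ)]
    have h3 : |θ - ρ| ≤ γ := by rwa [abs_sub_comm] at hρθ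
    gcongr
  have h4 : |a / ρ - b / θ| ≤ |a / ρ - a / θ| + |a - b| / θ := by
    have heq : a / ρ - b / θ = (a / ρ - a / θ) + (a - b) / θ := by ring
    rw [heq]
    refine (abs_add_le _ _).trans ?_
    rw [abs_div, abs_of_pos hθ]
  have h5 : |a - b| / θ ≤ ε - a * γ / ((θ - γ) * θ) := by
    have h6 : |a - b| / θ ≤ (ε * θ - a * γ / (θ - γ)) / θ := by gcongr
    have heq : (ε * θ - a * γ / (θ - γ)) / θ = ε - a * γ / ((θ - γ) * θ) := by
      field_simp
    linarith [heq ▸ h6]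
  linarith

theorem mean_consistency_implies_eps_bias
    {Ω 𝓧 𝓡 : Type*} [Fintype Ω] [Fintype 𝓧] [Fintype 𝓡]
    (P : Ω → ℝ) (hP : ∀ ω, 0 ≤ P ω) (hPsum : ∑ ω, P ω = 1)
    (X : Ω → 𝓧) (R H : Ω → 𝓡) (f : 𝓧 → Bool) (r : 𝓡) (ε γ : ℝ)
    (hε0 : 0 ≤ ε) (hε1 : ε ≤ 1)
    (hθ : 0 < Pr P (fun ω => R ω = r))
    (hρ : 0 < Pr P (fun ω => H ω = r))
    (hν : 0 < Pr P (fun ω => f (X ω) = true))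
    (hγθ : γ < Pr P (fun ω => R ω = r))
    (hγ : |Pr P (fun ω => H ω = r) - Pr P (fun ω => R ω = r)| ≤ γ)
    (hmc : |cPr P (fun ω => H ω = r) (fun ω => f (X ω) = true) -
            cPr P (fun ω => R ω = r) (fun ω => f (X ω) = true)| ≤
        ε * Pr P (fun ω => R ω = r) / Pr P (fun ω => f (X ω) = true) -
          cPr P (fun ω => H ω = r) (fun ω => f (X ω) = true) * γ /
            (Pr P (fun ω => R ω = r) - γ)) :
    |cPr P (fun ω => f (X ω) = true) (fun ω => H ω = r) -
        cPr P (fun ω => f (X ω) = true) (fun ω => R ω = r)| ≤ ε := by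
  have hnn : ∀ A : Ω → Prop, 0 ≤ Pr P A := fun A =>
    Finset.sum_nonneg fun ω _ => by split <;> [exact hP ω; exact le_refl 0]
  have hcomm : ∀ A B : Ω → Prop, Pr P (fun ω => A ω ∧ B ω) = Pr P (fun ω => B ω ∧ A ω) := by
    intro A B
    unfold Pr
    exact Finset.sum_congr rfl fun ω _ => by simp only [and_comm]; congr 1
  simp only [cPr] at hmc ⊢
  rw [hcomm (fun ω => H ω = r) (fun ω => f (X ω) = true)] at hmc
  rw [hcomm (fun ω => R ω = r) (fun ω => f (X ω) = true)] at hmc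
  exact arith_aux _ _ _ _ _ _ _ hθ hρ hν
    (hnn _) (by linarith) hγ hmc
end

section
/- (Theorem: ε-biased estimates imply mean consistency.) Suppose |P(f(X) = 1 | h(X) = r) − P(f(X) = 1 | R = r)| ≤ ε and |ρ_r − θ_r| ≤ γ, where θ_r = P(R = r), ρ_r = P(h(X) = r), ν_f = P(f(X) = 1). Then the mean consistency violation satisfies |P(h(X) = r | f(X) = 1) − P(R = r | f(X) = 1)| ≤ (ε θ_r)/ν_f + γ · P(f(X) = 1 | h(X) = r)/ν_f. -/
open scoped Classical
open Finset

theorem eps_bias_implies_mean_consistency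
    {Ω 𝓧 𝓡 : Type*} [Fintype Ω] [Fintype 𝓧] [Fintype 𝓡]
    (P : Ω → ℝ) (hP : ∀ ω, 0 ≤ P ω) (hPsum : ∑ ω, P ω = 1)
    (X : Ω → 𝓧) (R H : Ω → 𝓡) (f : 𝓧 → Bool) (r : 𝓡) (ε γ : ℝ)
    (hθ : 0 < Pr P (fun ω => R ω = r))
    (hρ : 0 < Pr P (fun ω => H ω = r))
    (hν : 0 < Pr P (fun ω => f (X ω) = true))
    (hγ : |Pr P (fun ω => H ω = r) - Pr P (fun ω => R ω = r)| ≤ γ)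
    (hbias : |cPr P (fun ω => f (X ω) = true) (fun ω => H ω = r) -
        cPr P (fun ω => f (X ω) = true) (fun ω => R ω = r)| ≤ ε) :
    |cPr P (fun ω => H ω = r) (fun ω => f (X ω) = true) -
        cPr P (fun ω => R ω = r) (fun ω => f (X ω) = true)| ≤
      ε * Pr P (fun ω => R ω = r) / Pr P (fun ω => f (X ω) = true) +
        γ * cPr P (fun ω => f (X ω) = true) (fun ω => H ω = r) /
          Pr P (fun ω => f (X ω) = true) := by

  classical
  set θ := Pr P (fun ω => R ω = r) with hθdef
  set ρ := Pr P (fun ω => H ω = r) with hρdef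
  set ν := Pr P (fun ω => f (X ω) = true) with hνdef
  have hPrnn : ∀ (A : Ω → Prop), 0 ≤ Pr P A := by
    intro A
    apply Finset.sum_nonneg
    intro ω _
    split <;> [exact hP ω; rfl]
  have hcomm : ∀ (A B : Ω → Prop),
      Pr P (fun ω => A ω ∧ B ω) = Pr P (fun ω => B ω ∧ A ω) := by
    intro A B
    unfold Pr
    refine Finset.sum_congr rfl fun ω _ => ?_
    simp [and_comm]
  set a := cPr P (fun ω => f (X ω) = true) (fun ω => H ω = r) with hadef
  set b := cPr P (fun ω => f (X ω) = true) (fun ω => R ω = r) with hbdef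
  have ha0 : 0 ≤ a := div_nonneg (hPrnn _) hρ.le
  have hFH : Pr P (fun ω => f (X ω) = true ∧ H ω = r) = a * ρ := by
    rw [hadef, cPr, ← hρdef]; field_simp
  have hFR : Pr P (fun ω => f (X ω) = true ∧ R ω = r) = b * θ := by
    rw [hbdef, cPr, ← hθdef]; field_simp
  have hL : cPr P (fun ω => H ω = r) (fun ω => f (X ω) = true) -
      cPr P (fun ω => R ω = r) (fun ω => f (X ω) = true) = (a * ρ - b * θ) / ν := by
    rw [cPr, cPr, hcomm (fun ω => H ω = r) (fun ω => f (X ω) = true),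
      hcomm (fun ω => R ω = r) (fun ω => f (X ω) = true), hFH, hFR, ← hνdef,
      div_sub_div_same]
  rw [hL]
  have key : |a * ρ - b * θ| ≤ ε * θ + γ * a := by
    have h1 : a * ρ - b * θ = (a - b) * θ + a * (ρ - θ) := by ring
    rw [h1]
    calc |(a - b) * θ + a * (ρ - θ)| ≤ |(a - b) * θ| + |a * (ρ - θ)| := abs_add_le _ _
      _ = |a - b| * θ + a * |ρ - θ| := by
          rw [abs_mul, abs_mul, abs_of_nonneg hθ.le, abs_of_nonneg ha0]
      _ ≤ ε * θ + γ * a := by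
          have h2 : |a - b| * θ ≤ ε * θ := mul_le_mul_of_nonneg_right hbias hθ.le
          have h3 : a * |ρ - θ| ≤ a * γ := mul_le_mul_of_nonneg_left hγ ha0
          linarith
  rw [abs_div, abs_of_nonneg hν.le, ← add_div]
  gcongr
end
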